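/- Let n be a positive integer, β > 0, t > 0, and x ∈ ℝ with x ≠ 0. Then ∫_t^∞ r^{n−1} (r−t)^{−3/2} · exp( −r x²/(2t(r−t)) − β r ) dr ≤ (√(2β)/|x|) · ∫_t^∞ r^{n−1} (r−t)^{−1/2} · exp( −r x²/(2t(r−t)) − β r ) dr, both integrals being finite. -/

import Mathlib

open MeasureTheory Set Real

/-!
Put `s = r - t` and `c = x² / (2β)`. The exponent equals `-x²/(2t) - βt - (x²/2)/s - βs`, which is
invariant under the involution `s ↦ c/s`, while `(√c)⁻¹ s^(-1/2) - s^(-3/2)`, multiplied by the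
Jacobian `c/s²`, changes sign under it. Hence the integral of `r^(n-1)` against this signed density is
half the integral of `(s + t)^(n-1) - (c/s + t)^(n-1)` against it, and both factors have the sign of
`s - √c`. As `(√c)⁻¹ = √(2β)/|x|`, this is the inequality. Both integrands are dominated by a multiple
of `r^(n-1) e^(-βr)`, because `s^p e^(-(x²/2)/s)` is bounded for `-2 ≤ p ≤ 0`.
-/

lemma rpow_mul_exp_neg_div_le {a p s : ℝ} (ha : 0 < a) (hp : -2 ≤ p) (hp0 : p ≤ 0) (hs : 0 < s) :
    s ^ p * exp (-(a / s)) ≤ 1 + 2 / a ^ 2 := by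
  have hy : 0 < a / s := div_pos ha hs
  rcases le_total 1 s with hs1 | hs1
  · have hexp : exp (-(a / s)) ≤ 1 := exp_le_one_iff.2 (by linarith)
    have : s ^ p ≤ 1 := rpow_le_one_of_one_le_of_nonpos hs1 hp0
    have h2 : 0 ≤ 2 / a ^ 2 := by positivity
    nlinarith [exp_pos (-(a / s)), rpow_nonneg hs.le p]
  · have hquad : (a / s) ^ 2 ≤ 2 * exp (a / s) := by
      nlinarith [quadratic_le_exp_of_nonneg hy.le]
    calc s ^ p * exp (-(a / s)) ≤ s ^ (-2 : ℝ) * exp (-(a / s)) :=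
          mul_le_mul_of_nonneg_right (rpow_le_rpow_of_exponent_ge hs hs1 hp) (exp_pos _).le
      _ = (a / s) ^ 2 / exp (a / s) / a ^ 2 := by
          rw [rpow_neg hs.le, rpow_two, exp_neg]
          field_simp
      _ ≤ 2 / a ^ 2 := by
          gcongr
          rwa [div_le_iff₀ (exp_pos _)]
      _ ≤ 1 + 2 / a ^ 2 := le_add_of_nonneg_left zero_le_one

lemma exponent_eq_sub_sub {r t x β : ℝ} (ht : t ≠ 0) (hr : r ≠ t) :
    -(r * x ^ 2) / (2 * t * (r - t)) - β * r = -(x ^ 2 / (2 * t)) - x ^ 2 / 2 / (r - t) - β * r := by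
  have : r - t ≠ 0 := sub_ne_zero.2 hr
  field_simp
  ring

lemma integrableOn_pow_mul_rpow_mul_exp (m : ℕ) {p β t x : ℝ} (hp : -2 ≤ p) (hp0 : p ≤ 0)
    (hβ : 0 < β) (ht : 0 < t) (hx : x ≠ 0) :
    IntegrableOn (fun r : ℝ => r ^ m * (r - t) ^ p *
      exp (-(r * x ^ 2) / (2 * t * (r - t)) - β * r)) (Ioi t) := by
  have ha : 0 < x ^ 2 / 2 := by positivity
  have hdom : IntegrableOn (fun r => (1 + 2 / (x ^ 2 / 2) ^ 2) * (r ^ m * exp (-β * r))) (Ioi t) := by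
    have := integrableOn_rpow_mul_exp_neg_mul_rpow (s := m) (p := 1)
      (by linarith [m.cast_nonneg (α := ℝ)]) one_pos hβ
    refine ((this.mono_set (Ioi_subset_Ioi ht.le)).congr_fun (fun r _ => ?_)
      measurableSet_Ioi).const_mul _
    simp only [rpow_natCast, rpow_one]
  refine hdom.mono' (by fun_prop) ((ae_restrict_iff' measurableSet_Ioi).2 (ae_of_all _ ?_))
  intro r hr
  have hs : 0 < r - t := sub_pos.2 hr
  have hr0 : 0 < r := ht.trans hr
  rw [norm_of_nonneg (by positivity)]
  have hexp : exp (-(r * x ^ 2) / (2 * t * (r - t)) - β * r) ≤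
      exp (-(x ^ 2 / 2 / (r - t))) * exp (-β * r) := by
    rw [← exp_add, exponent_eq_sub_sub ht.ne' (ne_of_gt hr)]
    gcongr
    linarith [div_nonneg (sq_nonneg x) (mul_pos two_pos ht).le]
  calc r ^ m * (r - t) ^ p * exp (-(r * x ^ 2) / (2 * t * (r - t)) - β * r)
      ≤ r ^ m * (r - t) ^ p * (exp (-(x ^ 2 / 2 / (r - t))) * exp (-β * r)) := by gcongr
    _ = r ^ m * ((r - t) ^ p * exp (-(x ^ 2 / 2 / (r - t)))) * exp (-β * r) := by ring
    _ ≤ r ^ m * (1 + 2 / (x ^ 2 / 2) ^ 2) * exp (-β * r) := by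
        gcongr
        exact rpow_mul_exp_neg_div_le ha hp hp0 hs
    _ = (1 + 2 / (x ^ 2 / 2) ^ 2) * (r ^ m * exp (-β * r)) := by ring

section Inversion

variable {a c : ℝ}

lemma inversion_mem_Ioi (hc : 0 < c) {r : ℝ} (hr : a < r) : a < a + c / (r - a) := by
  have : 0 < c / (r - a) := div_pos hc (sub_pos.2 hr)
  linarith

lemma inversion_inversion (hc : c ≠ 0) (r : ℝ) :
    a + c / (a + c / (r - a) - a) = r := by
  rw [add_sub_cancel_left, div_div_cancel₀ hc, add_sub_cancel]

lemma image_inversion_Ioi (hc : 0 < c) : (fun r => a + c / (r - a)) '' Ioi a = Ioi a :=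
  (Set.image_subset_iff.2 fun _ hr => inversion_mem_Ioi hc hr).antisymm
    fun _ hr => ⟨_, inversion_mem_Ioi hc hr, inversion_inversion hc.ne' _⟩

lemma injOn_inversion (hc : 0 < c) : InjOn (fun r => a + c / (r - a)) (Ioi a) :=
  fun r _ r' _ h => by
    rw [← inversion_inversion hc.ne' r, ← inversion_inversion hc.ne' r']
    exact congrArg (fun u => a + c / (u - a)) h

lemma hasDerivAt_inversion {r : ℝ} (hr : r ≠ a) :
    HasDerivAt (fun r => a + c / (r - a)) (-(c / (r - a) ^ 2)) r := by
  have h := (((hasDerivAt_id r).sub_const a).inv (sub_ne_zero.2 hr)).const_mul c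
  simpa [div_eq_mul_inv, mul_neg] using h.const_add a

theorem setIntegral_Ioi_nonneg_of_inversion (hc : 0 < c) {F : ℝ → ℝ}
    (hF : IntegrableOn F (Ioi a))
    (hsymm : ∀ r, a < r → 0 ≤ F r + c / (r - a) ^ 2 * F (a + c / (r - a))) :
    0 ≤ ∫ r in Ioi a, F r := by
  have hderiv : ∀ r ∈ Ioi a, HasDerivWithinAt (fun r => a + c / (r - a))
      (-(c / (r - a) ^ 2)) (Ioi a) r :=
    fun r hr => (hasDerivAt_inversion (ne_of_gt hr)).hasDerivWithinAt
  have habs : EqOn (fun r => |-(c / (r - a) ^ 2)| • F (a + c / (r - a)))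
      (fun r => c / (r - a) ^ 2 * F (a + c / (r - a))) (Ioi a) := fun r _ => by
    simp only [abs_neg, smul_eq_mul, abs_of_nonneg (div_nonneg hc.le (sq_nonneg (r - a)))]
  have hF' : IntegrableOn (fun r => c / (r - a) ^ 2 * F (a + c / (r - a))) (Ioi a) := by
    have h := integrableOn_image_iff_integrableOn_abs_deriv_smul measurableSet_Ioi hderiv
      (injOn_inversion hc) F
    rw [image_inversion_Ioi hc] at h
    exact (h.1 hF).congr_fun habs measurableSet_Ioi
  have hsub : ∫ r in Ioi a, F r = ∫ r in Ioi a, c / (r - a) ^ 2 * F (a + c / (r - a)) := by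
    have h := integral_image_eq_integral_abs_deriv_smul measurableSet_Ioi hderiv
      (injOn_inversion hc) F
    rw [image_inversion_Ioi hc] at h
    rw [h, setIntegral_congr_fun measurableSet_Ioi habs]
  have hsum : 0 ≤ ∫ r in Ioi a, (F r + c / (r - a) ^ 2 * F (a + c / (r - a))) :=
    setIntegral_nonneg measurableSet_Ioi hsymm
  rw [integral_add hF hF', ← hsub] at hsum
  linarith

theorem mul_add_inversion_nonneg (hc : 0 < c) {h ψ : ℝ → ℝ} (hh : MonotoneOn h (Ioi a))
    (hψ_antisymm : ∀ r, a < r → c / (r - a) ^ 2 * ψ (a + c / (r - a)) = -ψ r)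
    (hψ_nonneg : ∀ r, a < r → c ≤ (r - a) ^ 2 → 0 ≤ ψ r) {r : ℝ} (hr : a < r) :
    0 ≤ h r * ψ r + c / (r - a) ^ 2 * (h (a + c / (r - a)) * ψ (a + c / (r - a))) := by
  set r' := a + c / (r - a) with hr'_def
  have hr' : a < r' := inversion_mem_Ioi hc hr
  have hs : 0 < r - a := sub_pos.2 hr
  have hsum : h r * ψ r + c / (r - a) ^ 2 * (h r' * ψ r') = (h r - h r') * ψ r := by
    rw [mul_left_comm, hψ_antisymm r hr]
    ring
  rw [hsum]
  rcases le_total c ((r - a) ^ 2) with hbig | hsmall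
  · have hle : r' ≤ r := by
      rw [hr'_def, ← le_sub_iff_add_le', div_le_iff₀ hs]
      nlinarith
    exact mul_nonneg (sub_nonneg.2 (hh hr' hr hle)) (hψ_nonneg r hr hbig)
  · have hle : r ≤ r' := by
      rw [hr'_def, ← sub_le_iff_le_add', le_div_iff₀ hs]
      nlinarith
    have hψr' : 0 ≤ ψ r' := by
      refine hψ_nonneg r' hr' ?_
      rw [hr'_def, add_sub_cancel_left, div_pow, le_div_iff₀ (by positivity)]
      nlinarith
    have hψr : ψ r ≤ 0 := by
      rw [← neg_nonneg, ← hψ_antisymm r hr]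
      positivity
    exact mul_nonneg_of_nonpos_of_nonpos (sub_nonpos.2 (hh hr hr' hle)) hψr

end Inversion

lemma sq_rpow_neg_div_two {u : ℝ} (hu : 0 < u) (k : ℕ) : (u ^ 2) ^ (-(k : ℝ) / 2) = (u ^ k)⁻¹ := by
  rw [← rpow_natCast u 2, ← rpow_mul hu.le, show ((2 : ℕ) : ℝ) * (-(k : ℝ) / 2) = -k by push_cast; ring,
    rpow_neg hu.le, rpow_natCast]

lemma inversion_antisymm_rpow {γ s : ℝ} (hγ : 0 < γ) (hs : 0 < s) :
    γ ^ 2 / s ^ 2 * (γ⁻¹ * (γ ^ 2 / s) ^ (-(1 : ℝ) / 2) - (γ ^ 2 / s) ^ (-(3 : ℝ) / 2)) =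
      -(γ⁻¹ * s ^ (-(1 : ℝ) / 2) - s ^ (-(3 : ℝ) / 2)) := by
  obtain ⟨σ, hσ, rfl⟩ : ∃ σ, 0 < σ ∧ σ ^ 2 = s := ⟨√s, sqrt_pos.2 hs, sq_sqrt hs.le⟩
  have h1 := sq_rpow_neg_div_two hσ 1
  have h3 := sq_rpow_neg_div_two hσ 3
  have h1' := sq_rpow_neg_div_two (div_pos hγ hσ) 1
  have h3' := sq_rpow_neg_div_two (div_pos hγ hσ) 3
  push_cast at h1 h3 h1' h3'
  rw [div_pow] at h1' h3'
  rw [h1, h3, h1', h3']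
  field_simp
  ring

lemma inv_mul_rpow_sub_rpow_nonneg {γ s : ℝ} (hγ : 0 < γ) (hγs : γ ≤ s) :
    0 ≤ γ⁻¹ * s ^ (-(1 : ℝ) / 2) - s ^ (-(3 : ℝ) / 2) := by
  have hs : 0 < s := hγ.trans_le hγs
  have : s ^ (-(3 : ℝ) / 2) = s⁻¹ * s ^ (-(1 : ℝ) / 2) := by
    rw [show -(3 : ℝ) / 2 = -1 + -(1 : ℝ) / 2 by norm_num, rpow_add hs, rpow_neg_one]
  rw [this, sub_nonneg]
  exact mul_le_mul_of_nonneg_right (inv_anti₀ hγ hγs) (rpow_nonneg hs.le _)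

lemma exponent_inversion {r t x β c : ℝ} (hβ : β ≠ 0) (ht : t ≠ 0) (hx : x ≠ 0)
    (hc : c = x ^ 2 / (2 * β)) (hr : r ≠ t) :
    -((t + c / (r - t)) * x ^ 2) / (2 * t * (t + c / (r - t) - t)) - β * (t + c / (r - t)) =
      -(r * x ^ 2) / (2 * t * (r - t)) - β * r := by
  have : r - t ≠ 0 := sub_ne_zero.2 hr
  subst hc
  rw [add_sub_cancel_left]
  field_simp
  ring

lemma inversion_antisymm_rpow_mul_exp {r t x β γ : ℝ} (hβ : β ≠ 0) (ht : t ≠ 0) (hx : x ≠ 0)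
    (hγ : 0 < γ) (hγsq : γ ^ 2 = x ^ 2 / (2 * β)) (hr : t < r) :
    γ ^ 2 / (r - t) ^ 2 * ((γ⁻¹ * (t + γ ^ 2 / (r - t) - t) ^ (-(1 : ℝ) / 2) -
        (t + γ ^ 2 / (r - t) - t) ^ (-(3 : ℝ) / 2)) *
      exp (-((t + γ ^ 2 / (r - t)) * x ^ 2) / (2 * t * (t + γ ^ 2 / (r - t) - t)) -
        β * (t + γ ^ 2 / (r - t)))) =
      -((γ⁻¹ * (r - t) ^ (-(1 : ℝ) / 2) - (r - t) ^ (-(3 : ℝ) / 2)) *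
        exp (-(r * x ^ 2) / (2 * t * (r - t)) - β * r)) := by
  rw [exponent_inversion hβ ht hx hγsq (ne_of_gt hr), add_sub_cancel_left, ← mul_assoc,
    inversion_antisymm_rpow hγ (sub_pos.2 hr), neg_mul]

theorem gamma_prior_drift_bound
    (n : ℕ) (β t x : ℝ) (hβ : 0 < β) (ht : 0 < t) (hx : x ≠ 0) :
    IntegrableOn (fun r : ℝ => r ^ (n - 1) * (r - t) ^ (-(3:ℝ)/2) *
      Real.exp (-(r * x ^ 2) / (2 * t * (r - t)) - β * r)) (Set.Ioi t) ∧
    IntegrableOn (fun r : ℝ => r ^ (n - 1) * (r - t) ^ (-(1:ℝ)/2) *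
      Real.exp (-(r * x ^ 2) / (2 * t * (r - t)) - β * r)) (Set.Ioi t) ∧
    (∫ r in Set.Ioi t, r ^ (n - 1) * (r - t) ^ (-(3:ℝ)/2) *
        Real.exp (-(r * x ^ 2) / (2 * t * (r - t)) - β * r)) ≤
      (Real.sqrt (2 * β) / |x|) *
        (∫ r in Set.Ioi t, r ^ (n - 1) * (r - t) ^ (-(1:ℝ)/2) *
          Real.exp (-(r * x ^ 2) / (2 * t * (r - t)) - β * r)) := by
  have hI₃ := integrableOn_pow_mul_rpow_mul_exp (n - 1) (p := -(3 : ℝ) / 2) (by norm_num)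
    (by norm_num) hβ ht hx
  have hI₁ := integrableOn_pow_mul_rpow_mul_exp (n - 1) (p := -(1 : ℝ) / 2) (by norm_num)
    (by norm_num) hβ ht hx
  refine ⟨hI₃, hI₁, ?_⟩
  set γ := |x| / √(2 * β)
  have hγ : 0 < γ := div_pos (abs_pos.2 hx) (sqrt_pos.2 (by positivity))
  have hγsq : γ ^ 2 = x ^ 2 / (2 * β) := by rw [div_pow, sq_abs, sq_sqrt (by positivity)]
  have hmono : MonotoneOn (fun r : ℝ => r ^ (n - 1)) (Ioi t) :=
    fun r hr _ _ hrr' => pow_le_pow_left₀ (ht.trans hr).le hrr' _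
  have hsymm := setIntegral_Ioi_nonneg_of_inversion (pow_pos hγ 2)
    ((hI₁.const_mul γ⁻¹).sub hI₃) fun r hr => by
      convert mul_add_inversion_nonneg (pow_pos hγ 2) hmono (ψ := fun r =>
          (γ⁻¹ * (r - t) ^ (-(1 : ℝ) / 2) - (r - t) ^ (-(3 : ℝ) / 2)) *
            exp (-(r * x ^ 2) / (2 * t * (r - t)) - β * r))
        (fun r hr => inversion_antisymm_rpow_mul_exp hβ.ne' ht.ne' hx hγ hγsq hr)
        (fun r hr hle => mul_nonneg (inv_mul_rpow_sub_rpow_nonneg hγ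
          ((pow_le_pow_iff_left₀ hγ.le (sub_pos.2 hr).le two_ne_zero).1 hle)) (exp_pos _).le) hr
        using 1
      simp only [Pi.sub_apply]
      ring
  rw [Pi.sub_def, integral_sub (hI₁.const_mul _) hI₃, integral_const_mul, inv_div] at hsymm
  linarith
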